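/- Let (Γ, v₀) be a precover of the amalgam G = G₁ ∗_A G₂, and let Γ' be the graph obtained from Γ by removing a redundant X_j-monochromatic component C of Γ (removing all edges and all X_j-monochromatic vertices of C while keeping its bichromatic vertices; if Γ = C, then Γ' is the single-vertex graph with no edges). Then Γ' is a precover of G and Lab(Γ, v₀) = Lab(Γ', v₀'), where v₀' is the vertex of Γ' corresponding to v₀. -/

import Mathlib

open Monoid

/-- A graph labelled with `X^±`: each edge carries a letter of `X` together with a
sign (`true` for a positive letter `x`, `false` for `x⁻¹`), and there is a
fixed-point-free involution `bar` reversing edges and inverting labels. -/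
structure LabeledGraph (X : Type) : Type 1 where
  V : Type
  E : Type
  bar : E → E
  ini : E → V
  lab : E → X × Bool
  bar_bar : ∀ e, bar (bar e) = e
  bar_ne : ∀ e, bar e ≠ e
  lab_bar : ∀ e, lab (bar e) = ((lab e).1, !(lab e).2)

namespace LabeledGraph

variable {X : Type} (Γ : LabeledGraph X)

/-- the terminal vertex of an edge -/
def ter (e : Γ.E) : Γ.V := Γ.ini (Γ.bar e)

/-- `Γ.IsPathFrom v w l` : the list of edges `l` forms a path from `v` to `w` in `Γ`. -/
def IsPathFrom : Γ.V → Γ.V → List Γ.E → Prop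
  | v, w, [] => v = w
  | v, w, e :: l => Γ.ini e = v ∧ IsPathFrom (Γ.ter e) w l

/-- a graph is well-labelled if edges with the same initial vertex and the same label coincide -/
def WellLabeled : Prop :=
  ∀ e₁ e₂ : Γ.E, Γ.ini e₁ = Γ.ini e₂ → Γ.lab e₁ = Γ.lab e₂ → e₁ = e₂

def Connected : Prop := ∀ v w : Γ.V, ∃ l, Γ.IsPathFrom v w l

/-- the word over `X^±` read along a list of edges -/
def word (l : List Γ.E) : List (X × Bool) := l.map Γ.lab

/-- a path (list of edges) passes through a vertex -/
def PassesThrough (l : List Γ.E) (v : Γ.V) : Prop :=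
  ∃ e ∈ l, Γ.ini e = v ∨ Γ.ter e = v

/-- the list of vertices visited by a path starting at `v` -/
def pathVertices (v : Γ.V) (l : List Γ.E) : List Γ.V := v :: l.map Γ.ter

/-- `v` is within graph distance `n` of `u` -/
def DistLe (n : ℕ) (u v : Γ.V) : Prop := ∃ l, Γ.IsPathFrom u v l ∧ l.length ≤ n

/-- a list of edges is freely reduced -/
def FreelyReduced (l : List Γ.E) : Prop := l.Chain' (fun e e' => e' ≠ Γ.bar e)

end LabeledGraph

/-- evaluation in a group `G` of a word over `X^±`, via a map `g : X → G` -/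
def wordVal {X G : Type} [Group G] (g : X → G) (w : List (X × Bool)) : G :=
  (w.map fun p => if p.2 then g p.1 else (g p.1)⁻¹).prod

namespace LabeledGraph

variable {X G : Type} [Group G] (g : X → G) (Γ : LabeledGraph X)

/-- the value in `G` of (the label of) a path -/
def pathVal (l : List Γ.E) : G := wordVal g (Γ.word l)

/-- `Lab(Γ, v₀)` : the set of values of labels of closed paths at `v₀` -/
def LabSet (v₀ : Γ.V) : Set G :=
  {x | ∃ l, Γ.IsPathFrom v₀ v₀ l ∧ Γ.pathVal g l = x}

/-- a graph is `G`-based if every path whose label is trivial in `G` is closed -/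
def IsGBased : Prop :=
  ∀ v w l, Γ.IsPathFrom v w l → Γ.pathVal g l = 1 → v = w

end LabeledGraph

/-- a morphism of labelled graphs -/
structure GraphHom {X : Type} (Γ Δ : LabeledGraph X) where
  fV : Γ.V → Δ.V
  fE : Γ.E → Δ.E
  map_ini : ∀ e, Δ.ini (fE e) = fV (Γ.ini e)
  map_bar : ∀ e, Δ.bar (fE e) = fE (Γ.bar e)
  map_lab : ∀ e, Δ.lab (fE e) = Γ.lab e

/-- the image of a morphism of labelled graphs, as a labelled graph -/
def GraphHom.image {X : Type} {Γ Δ : LabeledGraph X} (ψ : GraphHom Γ Δ) :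
    LabeledGraph X where
  V := Set.range ψ.fV
  E := Set.range ψ.fE
  bar e := ⟨Δ.bar e.1, by
    obtain ⟨a, ha⟩ := e.2
    exact ⟨Γ.bar a, by rw [← ψ.map_bar, ha]⟩⟩
  ini e := ⟨Δ.ini e.1, by
    obtain ⟨a, ha⟩ := e.2
    exact ⟨Γ.ini a, by rw [← ψ.map_ini, ha]⟩⟩
  lab e := Δ.lab e.1
  bar_bar e := Subtype.ext (Δ.bar_bar e.1)
  bar_ne e h := Δ.bar_ne e.1 (congrArg Subtype.val h)
  lab_bar e := Δ.lab_bar e.1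

/-- an isomorphism of pointed labelled graphs exists -/
def IsPointedIso {X : Type} (Γ Δ : LabeledGraph X) (v₀ : Γ.V) (w₀ : Δ.V) : Prop :=
  ∃ ψ : GraphHom Γ Δ, Function.Bijective ψ.fV ∧ Function.Bijective ψ.fE ∧ ψ.fV v₀ = w₀

/-- right multiplication by `g` on the set of right cosets of `H` -/
def cosMul {G : Type} [Group G] (H : Subgroup G) (g : G) :
    Quotient (QuotientGroup.rightRel H) → Quotient (QuotientGroup.rightRel H) :=
  Quotient.map (· * g) <| by
    intro a b hab
    have hab' := (QuotientGroup.rightRel_apply).1 hab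
    exact (QuotientGroup.rightRel_apply).2 (by simpa [mul_inv_rev, mul_assoc] using hab')

/-- the relative Cayley graph of `G` with respect to a subgroup `H`, with edges labelled
by letters from `Y` embedded into an alphabet `X` and evaluated in `G` via `val`. -/
def relCayley {G : Type} [Group G] (H : Subgroup G) {Y X : Type}
    (emb : Y → X) (val : Y → G) : LabeledGraph X where
  V := Quotient (QuotientGroup.rightRel H)
  E := Quotient (QuotientGroup.rightRel H) × (Y × Bool)
  bar e := (cosMul H (if e.2.2 then val e.2.1 else (val e.2.1)⁻¹) e.1, (e.2.1, !e.2.2))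
  ini e := e.1
  lab e := (emb e.2.1, e.2.2)
  bar_bar := by
    rintro ⟨v, y, b⟩
    induction v using Quotient.inductionOn with
    | h a => cases b <;> simp [cosMul, mul_assoc]
  bar_ne := by
    rintro ⟨v, y, b⟩ h
    have := congrArg (fun e => e.2.2) h
    simp at this
  lab_bar := by rintro ⟨v, y, b⟩; rfl
/-- `(Γ', v₀')` is obtained from `(Γ, v₀)` by a single Stallings folding: the
identification of a pair of distinct edges with the same initial vertex and the
same label. -/
def IsFoldingOf {X : Type} (Γ Γ' : LabeledGraph X) (v₀ : Γ.V) (v₀' : Γ'.V) : Prop :=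
  ∃ (π : GraphHom Γ Γ') (e₁ e₂ : Γ.E),
    e₁ ≠ e₂ ∧ Γ.ini e₁ = Γ.ini e₂ ∧ Γ.lab e₁ = Γ.lab e₂ ∧
    Function.Surjective π.fV ∧ Function.Surjective π.fE ∧
    π.fV v₀ = v₀' ∧ π.fE e₁ = π.fE e₂ ∧ π.fV (Γ.ter e₁) = π.fV (Γ.ter e₂) ∧
    (∀ a b : Γ.E, π.fE a = π.fE b →
      a = b ∨ ({a, b} : Set Γ.E) = {e₁, e₂} ∨ ({a, b} : Set Γ.E) = {Γ.bar e₁, Γ.bar e₂}) ∧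
    (∀ u v : Γ.V, π.fV u = π.fV v → u = v ∨ ({u, v} : Set Γ.V) = {Γ.ter e₁, Γ.ter e₂})

/-- `(Γ', v₀')` is obtained from `(Γ, v₀)` by cutting a single hair: the removal of an
edge (pair) whose terminal vertex has degree one. -/
def IsHairCutOf {X : Type} (Γ Γ' : LabeledGraph X) (v₀ : Γ.V) (v₀' : Γ'.V) : Prop :=
  ∃ (π : GraphHom Γ' Γ) (e : Γ.E),
    (∀ e' : Γ.E, Γ.ini e' = Γ.ter e → e' = Γ.bar e) ∧
    Function.Injective π.fV ∧ Function.Injective π.fE ∧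
    Set.range π.fV = {v | v ≠ Γ.ter e} ∧
    Set.range π.fE = {f | f ≠ e ∧ f ≠ Γ.bar e} ∧
    π.fV v₀' = v₀

/-- `(Γ', v₀')` is obtained from `(Γ, v₀)` by identifying the two distinct vertices
`v₁` and `v₂` into a single vertex (the edge sets being in natural bijection). -/
def IsEndpointIdentification {X : Type} (Γ Γ' : LabeledGraph X) (v₁ v₂ : Γ.V)
    (v₀ : Γ.V) (v₀' : Γ'.V) : Prop :=
  ∃ π : GraphHom Γ Γ', Function.Surjective π.fV ∧ Function.Bijective π.fE ∧
    π.fV v₀ = v₀' ∧ π.fV v₁ = π.fV v₂ ∧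
    ∀ u v : Γ.V, π.fV u = π.fV v → u = v ∨ ({u, v} : Set Γ.V) = {v₁, v₂}
namespace Amalgam

variable {X : Fin 2 → Type} {Gi : Fin 2 → Type} [∀ i, Group (Gi i)]
  {A : Type} [Group A] (φ : ∀ i, A →* Gi i) (gen : ∀ i, X i → Gi i)

/-- the combined alphabet `X = X₁ ⊔ X₂` (disjoint by construction) -/
abbrev Alpha (X : Fin 2 → Type) : Type := (i : Fin 2) × X i

/-- evaluation of the letters in the amalgam `G = G₁ ∗_A G₂` -/
def genG : Alpha X → PushoutI φ := fun a => PushoutI.of (φ := φ) a.1 (gen a.1 a.2)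

/-- the image of the amalgamated subgroup `A` in `G` -/
def Asub : Subgroup (PushoutI φ) := (PushoutI.base φ).range

variable (Γ : LabeledGraph (Alpha X))

/-- the color (`1` or `2`) of an edge -/
def colorE (e : Γ.E) : Fin 2 := (Γ.lab e).1.1

/-- one step between vertices along an edge of color `i` -/
def MonoStep (i : Fin 2) (u v : Γ.V) : Prop :=
  ∃ e : Γ.E, colorE Γ e = i ∧ Γ.ini e = u ∧ Γ.ter e = v

/-- reachability by paths of color `i` -/
def monoReach (i : Fin 2) : Γ.V → Γ.V → Prop := Relation.ReflTransGen (MonoStep Γ i)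

/-- the monochromatic component of an edge: all edges of the same color whose initial
vertex is monochromatically reachable from that of `e₀` -/
def monoComponent (e₀ : Γ.E) : Set Γ.E :=
  {e | colorE Γ e = colorE Γ e₀ ∧ monoReach Γ (colorE Γ e₀) (Γ.ini e₀) (Γ.ini e)}

/-- `C` is an `X_i`-monochromatic component of `Γ` -/
def IsMonoComponent (i : Fin 2) (C : Set Γ.E) : Prop :=
  ∃ e₀, colorE Γ e₀ = i ∧ C = monoComponent Γ e₀

/-- the vertex set of a set of edges -/
def VSet (C : Set Γ.E) : Set Γ.V := {v | ∃ e ∈ C, Γ.ini e = v}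

/-- a vertex is bichromatic if edges of both colors begin at it -/
def Bichromatic (v : Γ.V) : Prop :=
  (∃ e, Γ.ini e = v ∧ colorE Γ e = 0) ∧ (∃ e, Γ.ini e = v ∧ colorE Γ e = 1)

/-- the bichromatic vertices of a component -/
def VB (C : Set Γ.E) : Set Γ.V := {v ∈ VSet Γ C | Bichromatic Γ v}

/-- `Lab(C, u)` : values of labels of closed paths at `u` inside the edge set `C` -/
def LabSetIn (C : Set Γ.E) (u : Γ.V) : Set (PushoutI φ) :=
  {x | ∃ l, (∀ e ∈ l, e ∈ C) ∧ Γ.IsPathFrom u u l ∧ Γ.pathVal (genG φ gen) l = x}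

/-- the `A`-orbit of a vertex `ϑ` inside a monochromatic component `C` -/
def AOrbit (C : Set Γ.E) (ϑ : Γ.V) : Set Γ.V :=
  {v | ∃ l, (∀ e ∈ l, e ∈ C) ∧ Γ.IsPathFrom ϑ v l ∧ Γ.pathVal (genG φ gen) l ∈ Asub φ}

/-- `Γ` is `X_i^±`-saturated at `v` -/
def SaturatedAt (i : Fin 2) (v : Γ.V) : Prop :=
  ∀ (x : X i) (b : Bool), ∃ e : Γ.E, Γ.ini e = v ∧ Γ.lab e = (⟨i, x⟩, b)

/-- a (connected) precover of `G = G₁ ∗_A G₂` : a well-labelled `G`-based graph all of whose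
monochromatic components are covers of the corresponding free factor -/
def IsPrecover : Prop :=
  Γ.WellLabeled ∧ Γ.Connected ∧ Γ.IsGBased (genG φ gen) ∧
    ∀ i C, IsMonoComponent Γ i C → ∀ v ∈ VSet Γ C, SaturatedAt Γ i v

/-- a redundant monochromatic component of a pointed precover -/
def Redundant (v₀ : Γ.V) (i : Fin 2) (C : Set Γ.E) : Prop :=
  IsMonoComponent Γ i C ∧
    (((∀ j D, IsMonoComponent Γ j D → D = C) ∧ LabSetIn φ gen Γ C v₀ = {1}) ∨
      ((∃ j D, IsMonoComponent Γ j D ∧ D ≠ C) ∧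
        (∀ ϑ ∈ VB Γ C, LabSetIn φ gen Γ C ϑ ⊆ (Asub φ : Set (PushoutI φ)) ∧
          VB Γ C = AOrbit φ gen Γ C ϑ) ∧
        (v₀ ∉ VSet Γ C ∨ (v₀ ∈ VB Γ C ∧ LabSetIn φ gen Γ C v₀ = {1}))))

/-- a reduced precover -/
def IsReducedPrecover (v₀ : Γ.V) : Prop :=
  IsPrecover φ gen Γ ∧ (∀ i C, ¬ Redundant φ gen Γ v₀ i C) ∧
    ∀ i C, IsMonoComponent Γ i C → v₀ ∈ VSet Γ C →
      LabSetIn φ gen Γ C v₀ ∩ (Asub φ : Set (PushoutI φ)) ≠ {1} →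
      ∃ j D, j ≠ i ∧ IsMonoComponent Γ j D ∧ v₀ ∈ VSet Γ D ∧
        LabSetIn φ gen Γ D v₀ ∩ (Asub φ : Set (PushoutI φ)) =
          LabSetIn φ gen Γ C v₀ ∩ (Asub φ : Set (PushoutI φ))

/-- a decomposition into monochromatic blocks witnessing a word in normal form:
each block is nonempty and monochromatic, consecutive blocks have different colors,
each syllable is nontrivial, and if there is more than one syllable then no syllable
lies in (the image of) `A` -/
def NormalParts (parts : List (Fin 2 × List (Alpha X × Bool))) : Prop :=
  parts ≠ [] ∧
    (∀ p ∈ parts, p.2 ≠ [] ∧ ∀ a ∈ p.2, a.1.1 = p.1) ∧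
    parts.Chain' (fun p q => p.1 ≠ q.1) ∧
    (∀ p ∈ parts, wordVal (genG φ gen) p.2 ≠ 1) ∧
    (parts.length ≠ 1 → ∀ p ∈ parts, wordVal (genG φ gen) p.2 ∉ Asub φ)

/-- a word over `X^±` is in normal form -/
def IsNormalWord (w : List (Alpha X × Bool)) : Prop :=
  ∃ parts, NormalParts φ gen parts ∧ w = (parts.map Prod.snd).flatten

/-- a normal path from `v` to `w` : a path whose label is a word in normal form -/
def IsNormalPathFrom (v w : Γ.V) (l : List Γ.E) : Prop :=
  Γ.IsPathFrom v w l ∧ IsNormalWord φ gen (Γ.word l)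

/-- the relative Cayley graph `Cayley(G, H)` of the amalgam -/
def cayleyGraph (H : Subgroup (PushoutI φ)) : LabeledGraph (Alpha X) :=
  relCayley H (id : Alpha X → Alpha X) (genG φ gen)

/-- the basepoint `H · 1` of `Cayley(G, H)` -/
def cayleyBase (H : Subgroup (PushoutI φ)) : (cayleyGraph φ gen H).V :=
  Quotient.mk (QuotientGroup.rightRel H) 1

/-- an essential vertex of `Cayley(G, H)` : one through which a normal path closed at the
basepoint passes -/
def Essential (H : Subgroup (PushoutI φ)) (v : (cayleyGraph φ gen H).V) : Prop :=
  ∃ l, IsNormalPathFrom φ gen (cayleyGraph φ gen H) (cayleyBase φ gen H) (cayleyBase φ gen H) l ∧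
    (cayleyGraph φ gen H).PassesThrough l v

/-- the vertices of the normal core: the basepoint together with the essential vertices -/
def CoreV (H : Subgroup (PushoutI φ)) (v : (cayleyGraph φ gen H).V) : Prop :=
  v = cayleyBase φ gen H ∨ Essential φ gen H v

/-- the normal core of `Cayley(G, H)` : the restriction of `Cayley(G, H)` to the
essential vertices -/
def normalCore (H : Subgroup (PushoutI φ)) : LabeledGraph (Alpha X) where
  V := {v : (cayleyGraph φ gen H).V // CoreV φ gen H v}
  E := {e : (cayleyGraph φ gen H).E //
        CoreV φ gen H ((cayleyGraph φ gen H).ini e) ∧ CoreV φ gen H ((cayleyGraph φ gen H).ter e)}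
  bar e := ⟨(cayleyGraph φ gen H).bar e.1, by
    refine ⟨e.2.2, ?_⟩
    have : (cayleyGraph φ gen H).ter ((cayleyGraph φ gen H).bar e.1) = (cayleyGraph φ gen H).ini e.1 := by
      rw [LabeledGraph.ter, (cayleyGraph φ gen H).bar_bar]
    rw [this]
    exact e.2.1⟩
  ini e := ⟨(cayleyGraph φ gen H).ini e.1, e.2.1⟩
  lab e := (cayleyGraph φ gen H).lab e.1
  bar_bar e := Subtype.ext ((cayleyGraph φ gen H).bar_bar e.1)
  bar_ne e h := (cayleyGraph φ gen H).bar_ne e.1 (congrArg Subtype.val h)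
  lab_bar e := (cayleyGraph φ gen H).lab_bar e.1

/-- the basepoint of the normal core -/
def coreBase (H : Subgroup (PushoutI φ)) : (normalCore φ gen H).V :=
  ⟨cayleyBase φ gen H, Or.inl rfl⟩

/-- the relative Cayley graph of a free factor `G_j` with respect to a subgroup `L ≤ G_j`,
viewed as a graph labelled with `X^±` (using only letters of color `j`) -/
def cayleyFactor (j : Fin 2) (L : Subgroup (Gi j)) : LabeledGraph (Alpha X) :=
  relCayley L (fun x : X j => (⟨j, x⟩ : Alpha X)) (gen j)

/-- the diameter of the factor group `G_i` : the length of a longest geodesic in its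
Cayley graph, i.e. the least `n` such that every element is a product of at most `n`
generators and inverses -/
noncomputable def groupDiam (i : Fin 2) : ℕ :=
  sInf {n | ∀ h : Gi i, ∃ w : List (X i × Bool), wordVal (gen i) w = h ∧ w.length ≤ n}

end Amalgam

/-! ### Auxiliary lemmas -/

section AuxLists

theorem List.split_block {α : Type*} (P : α → Prop) :
    ∀ (l : List α) (a : α), P a → ∃ blk rest, a :: l = blk ++ rest ∧ blk ≠ [] ∧
      (∀ x ∈ blk, P x) ∧ (∀ x r', rest = x :: r' → ¬ P x) := by
  intro l
  induction l with
  | nil =>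
    intro a ha
    exact ⟨[a], [], rfl, by simp, by simpa, by simp⟩
  | cons b t ih =>
    intro a ha
    by_cases hb : P b
    · obtain ⟨blk, rest, heq, hne, hP, hhead⟩ := ih b hb
      refine ⟨a :: blk, rest, by rw [List.cons_append, ← heq], by simp, ?_, hhead⟩
      intro x hx
      rcases List.mem_cons.mp hx with rfl | hx
      · exact ha
      · exact hP x hx
    · refine ⟨[a], b :: t, rfl, by simp, by simpa, ?_⟩
      intro x r' h
      rw [List.cons_eq_cons] at h
      exact h.1 ▸ hb

end AuxLists

namespace LabeledGraph

variable {X : Type} {Γ : LabeledGraph X}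

theorem ter_bar (e : Γ.E) : Γ.ter (Γ.bar e) = Γ.ini e := by
  unfold ter; rw [Γ.bar_bar]

theorem isPathFrom_append {v u w : Γ.V} {l₁ l₂ : List Γ.E}
    (h₁ : Γ.IsPathFrom v u l₁) (h₂ : Γ.IsPathFrom u w l₂) :
    Γ.IsPathFrom v w (l₁ ++ l₂) := by
  induction l₁ generalizing v with
  | nil => cases h₁; exact h₂
  | cons e t ih => exact ⟨h₁.1, ih h₁.2⟩

theorem isPathFrom_append_iff {v w : Γ.V} {l₁ l₂ : List Γ.E} :
    Γ.IsPathFrom v w (l₁ ++ l₂) ↔ ∃ u, Γ.IsPathFrom v u l₁ ∧ Γ.IsPathFrom u w l₂ := by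
  induction l₁ generalizing v with
  | nil =>
    constructor
    · intro h; exact ⟨v, rfl, h⟩
    · rintro ⟨u, h₁, h₂⟩; cases h₁; exact h₂
  | cons e t ih =>
    constructor
    · rintro ⟨h₁, h₂⟩
      obtain ⟨u, hu₁, hu₂⟩ := ih.mp h₂
      exact ⟨u, ⟨h₁, hu₁⟩, hu₂⟩
    · rintro ⟨u, ⟨h₁, h₂⟩, h₃⟩
      exact ⟨h₁, ih.mpr ⟨u, h₂, h₃⟩⟩

variable {G : Type} [Group G] {g : X → G}

theorem wordVal_cons (p : X × Bool) (w : List (X × Bool)) :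
    wordVal g (p :: w) = (if p.2 then g p.1 else (g p.1)⁻¹) * wordVal g w := by
  simp [wordVal]

theorem wordVal_append (w₁ w₂ : List (X × Bool)) :
    wordVal g (w₁ ++ w₂) = wordVal g w₁ * wordVal g w₂ := by
  simp [wordVal]

theorem pathVal_nil : Γ.pathVal g ([] : List Γ.E) = 1 := rfl

theorem pathVal_cons (e : Γ.E) (l : List Γ.E) :
    Γ.pathVal g (e :: l) =
      (if (Γ.lab e).2 then g (Γ.lab e).1 else (g (Γ.lab e).1)⁻¹) * Γ.pathVal g l := by
  simp [pathVal, word, wordVal]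

theorem pathVal_append (l₁ l₂ : List Γ.E) :
    Γ.pathVal g (l₁ ++ l₂) = Γ.pathVal g l₁ * Γ.pathVal g l₂ := by
  simp [pathVal, word, wordVal]

theorem pathVal_eq_of_word_eq {Δ : LabeledGraph X} {l : List Γ.E} {m : List Δ.E}
    (h : Γ.word l = Δ.word m) : Γ.pathVal g l = Δ.pathVal g m := by
  simp [pathVal, h]

/-- the reversed path -/
def revPath (Γ : LabeledGraph X) (l : List Γ.E) : List Γ.E := (l.map Γ.bar).reverse

theorem mem_revPath {l : List Γ.E} {e : Γ.E} (h : e ∈ Γ.revPath l) :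
    ∃ f ∈ l, e = Γ.bar f := by
  simp only [revPath, List.mem_reverse, List.mem_map] at h
  obtain ⟨f, hf, rfl⟩ := h
  exact ⟨f, hf, rfl⟩

theorem revPath_cons (e : Γ.E) (l : List Γ.E) :
    Γ.revPath (e :: l) = Γ.revPath l ++ [Γ.bar e] := by
  simp [revPath]

theorem isPathFrom_revPath {v w : Γ.V} {l : List Γ.E} (h : Γ.IsPathFrom v w l) :
    Γ.IsPathFrom w v (Γ.revPath l) := by
  induction l generalizing v with
  | nil => exact h.symm
  | cons e t ih =>
    rw [revPath_cons]
    exact isPathFrom_append (ih h.2) ⟨rfl, (ter_bar e).trans h.1⟩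

theorem pathVal_single_bar (e : Γ.E) :
    Γ.pathVal g [Γ.bar e] = (Γ.pathVal g [e])⁻¹ := by
  rcases hb : (Γ.lab e).2 with _ | _ <;>
    simp [pathVal, word, wordVal, Γ.lab_bar, hb]

theorem pathVal_revPath (l : List Γ.E) :
    Γ.pathVal g (Γ.revPath l) = (Γ.pathVal g l)⁻¹ := by
  induction l with
  | nil => simp [revPath, pathVal_nil]
  | cons e t ih =>
    rw [revPath_cons, pathVal_append, ih, pathVal_single_bar]
    rw [show (e :: t) = [e] ++ t by rfl, pathVal_append, mul_inv_rev]

end LabeledGraph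

namespace GraphHom

variable {X : Type} {Γ Δ : LabeledGraph X} (ψ : GraphHom Γ Δ)

theorem map_ter (e : Γ.E) : Δ.ter (ψ.fE e) = ψ.fV (Γ.ter e) := by
  rw [LabeledGraph.ter, ψ.map_bar, ψ.map_ini]; rfl

theorem map_path {v w : Γ.V} {l : List Γ.E} (h : Γ.IsPathFrom v w l) :
    Δ.IsPathFrom (ψ.fV v) (ψ.fV w) (l.map ψ.fE) := by
  induction l generalizing v with
  | nil => exact congrArg ψ.fV h
  | cons e t ih =>
    refine ⟨(ψ.map_ini e).trans (congrArg ψ.fV h.1), ?_⟩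
    rw [ψ.map_ter]
    exact ih h.2

theorem word_map (l : List Γ.E) : Δ.word (l.map ψ.fE) = Γ.word l := by
  simp [LabeledGraph.word, Function.comp, ψ.map_lab]

/-- lifting a path along an injective embedding whose edge-range is the complement
of a set `C` -/
theorem lift_path (hiV : Function.Injective ψ.fV) (C : Set Δ.E)
    (hrE : Set.range ψ.fE = {e | e ∉ C}) :
    ∀ (l : List Δ.E) (v' : Γ.V) (w : Δ.V), Δ.IsPathFrom (ψ.fV v') w l →
      (∀ e ∈ l, e ∉ C) →
      ∃ (w' : Γ.V) (l' : List Γ.E), ψ.fV w' = w ∧ Γ.IsPathFrom v' w' l' ∧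
        l'.map ψ.fE = l := by
  intro l
  induction l with
  | nil =>
    intro v' w h _
    exact ⟨v', [], h, rfl, rfl⟩
  | cons e t ih =>
    intro v' w h hl
    have he : e ∈ Set.range ψ.fE := by
      rw [hrE]; exact hl e List.mem_cons_self
    obtain ⟨e', rfl⟩ := he
    have hini : Γ.ini e' = v' := hiV (by rw [← ψ.map_ini]; exact h.1)
    obtain ⟨w', l', h1, h2, h3⟩ := ih (Γ.ter e') w
      (by rw [← ψ.map_ter]; exact h.2) (fun f hf => hl f (List.mem_cons_of_mem _ hf))
    exact ⟨w', e' :: l', h1, ⟨hini, h2⟩, by simp [h3]⟩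

end GraphHom

namespace Amalgam

variable {X : Fin 2 → Type} {Gi : Fin 2 → Type} [∀ i, Group (Gi i)]
  {A : Type} [Group A] {φ : ∀ i, A →* Gi i} {gen : ∀ i, X i → Gi i}
  {Γ : LabeledGraph (Alpha X)}

theorem colorE_bar (e : Γ.E) : colorE Γ (Γ.bar e) = colorE Γ e := by
  simp [colorE, Γ.lab_bar]

theorem bar_mem_monoComponent {e₀ e : Γ.E} (h : e ∈ monoComponent Γ e₀) :
    Γ.bar e ∈ monoComponent Γ e₀ :=
  ⟨(colorE_bar e).trans h.1, h.2.tail ⟨e, h.1, rfl, rfl⟩⟩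

theorem mem_monoComponent_of_ini {e₀ e : Γ.E} (h : e ∈ monoComponent Γ e₀) (f : Γ.E)
    (hcol : colorE Γ f = colorE Γ e₀) (hini : Γ.ini f = Γ.ini e) :
    f ∈ monoComponent Γ e₀ :=
  ⟨hcol, hini ▸ h.2⟩

theorem satAt (hpre : IsPrecover φ gen Γ) {i : Fin 2} {u : Γ.V}
    (h : ∃ e, colorE Γ e = i ∧ Γ.ini e = u) : SaturatedAt Γ i u := by
  obtain ⟨e, hc, hi⟩ := h
  exact hpre.2.2.2 i (monoComponent Γ e) ⟨e, hc, rfl⟩ u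
    ⟨e, ⟨rfl, Relation.ReflTransGen.refl⟩, hi⟩

theorem readPath (hpre : IsPrecover φ gen Γ) (i : Fin 2) :
    ∀ (w : List (X i × Bool)) (u : Γ.V), (∃ e, colorE Γ e = i ∧ Γ.ini e = u) →
      ∃ (v : Γ.V) (l : List Γ.E), Γ.IsPathFrom u v l ∧ (∀ e ∈ l, colorE Γ e = i) ∧
        Γ.word l = w.map (fun p => ((⟨i, p.1⟩ : Alpha X), p.2)) := by
  intro w
  induction w with
  | nil =>
    intro u _
    refine ⟨u, [], ?_, by simp, by simp [LabeledGraph.word]⟩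
    rfl
  | cons p w ih =>
    intro u hu
    obtain ⟨e, hi, hl⟩ := satAt hpre hu p.1 p.2
    have hce : colorE Γ e = i := by simp [colorE, hl]
    obtain ⟨v, l, hp, hcl, hw⟩ := ih (Γ.ter e)
      ⟨Γ.bar e, (colorE_bar e).trans hce, rfl⟩
    refine ⟨v, e :: l, ⟨hi, hp⟩, ?_, ?_⟩
    · intro f hf
      rcases List.mem_cons.mp hf with rfl | hf
      · exact hce
      · exact hcl f hf
    · simp only [LabeledGraph.word, List.map_cons] at hw ⊢
      rw [hl, hw]

theorem wordVal_map_embed (i : Fin 2) (w : List (X i × Bool)) :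
    wordVal (genG φ gen) (w.map fun p => ((⟨i, p.1⟩ : Alpha X), p.2)) =
      Monoid.PushoutI.of (φ := φ) i (wordVal (gen i) w) := by
  induction w with
  | nil => simp [wordVal]
  | cons p w ih =>
    rcases p with ⟨x, b⟩
    cases b <;>
      simp [LabeledGraph.wordVal_cons, ih, genG, map_mul, map_inv]

/-- the inverse word -/
def invWord {Y : Type} (w : List (Y × Bool)) : List (Y × Bool) :=
  (w.map fun p => (p.1, !p.2)).reverse

theorem wordVal_invWord {Y G : Type} [Group G] (g : Y → G) (w : List (Y × Bool)) :
    wordVal g (invWord w) = (wordVal g w)⁻¹ := by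
  induction w with
  | nil => simp [invWord, wordVal]
  | cons p w ih =>
    have : invWord (p :: w) = invWord w ++ [(p.1, !p.2)] := by simp [invWord]
    rw [this, LabeledGraph.wordVal_append, ih, LabeledGraph.wordVal_cons]
    rcases p with ⟨x, b⟩
    cases b <;> simp [wordVal, mul_comm]

theorem exists_word {i : Fin 2} (hgen : Subgroup.closure (Set.range (gen i)) = ⊤)
    (h : Gi i) : ∃ w : List (X i × Bool), wordVal (gen i) w = h := by
  have hmem : h ∈ Subgroup.closure (Set.range (gen i)) := hgen ▸ Subgroup.mem_top h
  refine Subgroup.closure_induction ?_ ?_ ?_ ?_ hmem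
  · rintro x ⟨x₀, rfl⟩
    exact ⟨[(x₀, true)], by simp [wordVal]⟩
  · exact ⟨[], rfl⟩
  · rintro x y _ _ ⟨w₁, rfl⟩ ⟨w₂, rfl⟩
    exact ⟨w₁ ++ w₂, LabeledGraph.wordVal_append w₁ w₂⟩
  · rintro x _ ⟨w, rfl⟩
    exact ⟨invWord w, wordVal_invWord _ w⟩

theorem fin_two_self : ∀ j : Fin 2, j = 0 ∨ j = 1 := by decide

theorem fin_two_cases : ∀ a b : Fin 2, a ≠ b → (a = 0 ∧ b = 1) ∨ (a = 1 ∧ b = 0) := by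
  decide

end Amalgam

open Amalgam in
/-- Removing a redundant monochromatic component from a precover
`(Γ, v₀)` of the amalgam `G = G₁ ∗_A G₂` (keeping its bichromatic vertices, and keeping
the basepoint) yields a precover determining the same subgroup. -/
theorem stmt_16
    {X : Fin 2 → Type} {Gi : Fin 2 → Type} [∀ i, Group (Gi i)] [∀ i, Finite (X i)]
    {A : Type} [Group A] (φ : ∀ i, A →* Gi i) (gen : ∀ i, X i → Gi i)
    (hφ : ∀ i, Function.Injective (φ i))
    (hgen : ∀ i, Subgroup.closure (Set.range (gen i)) = ⊤)
    (Γ : LabeledGraph (Alpha X)) (v₀ : Γ.V) (hpre : IsPrecover φ gen Γ)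
    (j : Fin 2) (C : Set Γ.E) (hred : Redundant φ gen Γ v₀ j C)
    (Γ' : LabeledGraph (Alpha X)) (v₀' : Γ'.V) (ψ : GraphHom Γ' Γ)
    (hiV : Function.Injective ψ.fV) (hiE : Function.Injective ψ.fE)
    (hrE : Set.range ψ.fE = {e | e ∉ C})
    (hrV : Set.range ψ.fV = insert v₀ {v | v ∉ VSet Γ C ∨ Bichromatic Γ v})
    (hb : ψ.fV v₀' = v₀) :
    IsPrecover φ gen Γ' ∧ Γ'.LabSet (genG φ gen) v₀' = Γ.LabSet (genG φ gen) v₀ := by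
  classical
  have hpre' := hpre
  obtain ⟨hWL, hConn, hGB, hSat⟩ := hpre
  obtain ⟨⟨e₀, hj0, hCeq⟩, hcases⟩ := hred
  -- basic facts about the component `C`
  have hcol : ∀ e ∈ C, colorE Γ e = j := by
    intro e he; rw [hCeq] at he; exact he.1.trans hj0
  have hbarC : ∀ e ∈ C, Γ.bar e ∈ C := by
    intro e he; rw [hCeq] at he ⊢; exact bar_mem_monoComponent he
  have hnotCbar : ∀ e, e ∉ C → Γ.bar e ∉ C := by
    intro e he h'
    exact he (by rw [← Γ.bar_bar e]; exact hbarC _ h')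
  have hterVS : ∀ e ∈ C, Γ.ter e ∈ VSet Γ C := fun e he => ⟨Γ.bar e, hbarC e he, rfl⟩
  have hcompat : ∀ f, colorE Γ f = j → Γ.ini f ∈ VSet Γ C → f ∈ C := by
    rintro f hf ⟨c, hcC, hic⟩
    rw [hCeq] at hcC ⊢
    exact mem_monoComponent_of_ini hcC f (hf.trans hj0.symm) hic.symm
  have hLB : ∀ v, v ∈ VSet Γ C → (∃ e, Γ.ini e = v ∧ e ∉ C) → v ∈ VB Γ C := by
    rintro v hvC ⟨e, hie, heC⟩
    have hcolne : colorE Γ e ≠ j := fun h => heC (hcompat e h (by rw [hie]; exact hvC))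
    obtain ⟨c, hcC, hic⟩ := hvC
    have hbi : Bichromatic Γ v := by
      rcases fin_two_cases _ _ hcolne with ⟨h0, h1⟩ | ⟨h1, h0⟩
      · exact ⟨⟨e, hie, h0⟩, ⟨c, hic, (hcol c hcC).trans h1⟩⟩
      · exact ⟨⟨c, hic, (hcol c hcC).trans h0⟩, ⟨e, hie, h1⟩⟩
    exact ⟨⟨c, hcC, hic⟩, hbi⟩
  -- the precover conditions not involving connectivity, uniform in both cases
  have hWL' : Γ'.WellLabeled := by
    intro e₁ e₂ h1 h2
    apply hiE
    apply hWL
    · rw [ψ.map_ini, ψ.map_ini, h1]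
    · rw [ψ.map_lab, ψ.map_lab, h2]
  have hGB' : Γ'.IsGBased (genG φ gen) := by
    intro v w l hp hval
    apply hiV
    refine hGB _ _ (l.map ψ.fE) (ψ.map_path hp) ?_
    exact (LabeledGraph.pathVal_eq_of_word_eq (ψ.word_map l)).trans hval
  have hSat' : ∀ i C', IsMonoComponent Γ' i C' → ∀ v ∈ VSet Γ' C', SaturatedAt Γ' i v := by
    rintro i C' ⟨e₀', h0, hC'⟩ v ⟨e', he', hini⟩
    have hcole' : colorE Γ' e' = i := by rw [hC'] at he'; exact he'.1.trans h0
    have hcolψ : colorE Γ (ψ.fE e') = i := by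
      rw [colorE, ψ.map_lab]; exact hcole'
    have hsat := satAt hpre' (i := i) (u := ψ.fV v)
      ⟨ψ.fE e', hcolψ, by rw [ψ.map_ini, hini]⟩
    intro x bb
    obtain ⟨e, hie, hle⟩ := hsat x bb
    have heC : e ∉ C := by
      intro heCmem
      have hij : i = j := by
        have h1 := hcol e heCmem
        have h2 : colorE Γ e = i := by simp [colorE, hle]
        exact h2.symm.trans h1
      have hr : ψ.fE e' ∉ C := by
        have : ψ.fE e' ∈ Set.range ψ.fE := ⟨e', rfl⟩
        rw [hrE] at this; exact this
      apply hr
      apply hcompat _ (hcolψ.trans hij)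
      refine ⟨e, heCmem, ?_⟩
      rw [hie, ψ.map_ini, hini]
    obtain ⟨ebar, rfl⟩ : e ∈ Set.range ψ.fE := by rw [hrE]; exact heC
    refine ⟨ebar, hiV (by rw [← ψ.map_ini]; exact hie), ?_⟩
    rw [← ψ.map_lab]; exact hle
  rcases hcases with ⟨huniq, hLab1⟩ | ⟨_, hVBprop, hv0⟩
  · -- Case 1 : `C` is the unique monochromatic component
    have hallC : ∀ e : Γ.E, e ∈ C := by
      intro e
      have h := huniq (colorE Γ e) (monoComponent Γ e) ⟨e, rfl, rfl⟩
      rw [← h]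
      exact ⟨rfl, Relation.ReflTransGen.refl⟩
    have hE' : ∀ e' : Γ'.E, False := by
      intro e'
      have : ψ.fE e' ∈ Set.range ψ.fE := ⟨e', rfl⟩
      rw [hrE] at this
      exact this (hallC _)
    have hVv0 : ∀ v' : Γ'.V, ψ.fV v' = v₀ := by
      intro v'
      have hm : ψ.fV v' ∈ insert v₀ {v | v ∉ VSet Γ C ∨ Bichromatic Γ v} := by
        rw [← hrV]; exact ⟨v', rfl⟩
      rcases Set.mem_insert_iff.mp hm with h | h
      · exact h
      rcases h with h | h
      · obtain ⟨l, hl⟩ := hConn (ψ.fV v') v₀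
        cases l with
        | nil => exact hl
        | cons e t => exact absurd ⟨e, hallC e, hl.1⟩ h
      · obtain ⟨⟨f0, _, h0⟩, ⟨f1, _, h1⟩⟩ := h
        have h01 : (0 : Fin 2) = 1 := by
          rw [← h0, ← h1, hcol f0 (hallC f0), hcol f1 (hallC f1)]
        exact absurd h01 (by decide)
    have hConn' : Γ'.Connected := by
      intro v' w'
      exact ⟨[], hiV ((hVv0 v').trans (hVv0 w').symm)⟩
    refine ⟨⟨hWL', hConn', hGB', hSat'⟩, ?_⟩
    have h1 : Γ.LabSet (genG φ gen) v₀ = {1} := by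
      apply Set.eq_singleton_iff_unique_mem.mpr
      constructor
      · refine ⟨[], ?_, rfl⟩; rfl
      · rintro x ⟨l, hp, hval⟩
        have hmem : x ∈ LabSetIn φ gen Γ C v₀ := ⟨l, fun e _ => hallC e, hp, hval⟩
        rw [hLab1] at hmem
        exact hmem
    have h2 : Γ'.LabSet (genG φ gen) v₀' = {1} := by
      apply Set.eq_singleton_iff_unique_mem.mpr
      constructor
      · refine ⟨[], ?_, rfl⟩; rfl
      · rintro x ⟨l, hp, hval⟩
        cases l with
        | nil => exact hval.symm
        | cons e t => exact (hE' e).elim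
    rw [h1, h2]
  · -- Case 2 : there is another component
    have hv0VB : v₀ ∈ VSet Γ C → v₀ ∈ VB Γ C := by
      intro h
      rcases hv0 with h' | h'
      · exact absurd h h'
      · exact h'.1
    have hrange : ∀ v, v ∈ Set.range ψ.fV → v ∈ VSet Γ C → v ∈ VB Γ C := by
      intro v hv hvC
      rw [hrV] at hv
      rcases Set.mem_insert_iff.mp hv with rfl | hv
      · exact hv0VB hvC
      rcases hv with hv | hv
      · exact absurd hvC hv
      · exact ⟨hvC, hv⟩
    have hVBrange : ∀ v, v ∈ VB Γ C → v ∈ Set.range ψ.fV := by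
      intro v hv
      rw [hrV]
      exact Set.mem_insert_iff.mpr (Or.inr (Or.inr hv.2))
    have hterRange : ∀ e, e ∉ C → Γ.ter e ∈ Set.range ψ.fV := by
      intro e he
      rw [hrV]
      by_cases h : Γ.ter e ∈ VSet Γ C
      · exact Set.mem_insert_iff.mpr
          (Or.inr (Or.inr (hLB _ h ⟨Γ.bar e, rfl, hnotCbar e he⟩).2))
      · exact Set.mem_insert_iff.mpr (Or.inr (Or.inl h))
    -- replacing a block of `C`-edges between bichromatic vertices
    have hrep : ∀ β₁ β₂, β₁ ∈ VB Γ C → β₂ ∈ VB Γ C → ∀ blk, (∀ e ∈ blk, e ∈ C) →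
        Γ.IsPathFrom β₁ β₂ blk →
        ∃ q, Γ.IsPathFrom β₁ β₂ q ∧ (∀ e ∈ q, e ∉ C) ∧
          Γ.pathVal (genG φ gen) q = Γ.pathVal (genG φ gen) blk := by
      intro β₁ β₂ h₁ h₂ blk hblkC hblk
      obtain ⟨hLabA, hOrb⟩ := hVBprop β₁ h₁
      have hβ₂ : β₂ ∈ AOrbit φ gen Γ C β₁ := by rw [← hOrb]; exact h₂
      obtain ⟨p₂, hp₂C, hp₂, hp₂A⟩ := hβ₂
      have hrevC : ∀ e ∈ Γ.revPath p₂, e ∈ C := by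
        intro e he
        obtain ⟨f, hf, rfl⟩ := LabeledGraph.mem_revPath he
        exact hbarC f (hp₂C f hf)
      have hclosed : Γ.pathVal (genG φ gen) blk * (Γ.pathVal (genG φ gen) p₂)⁻¹ ∈
          LabSetIn φ gen Γ C β₁ := by
        refine ⟨blk ++ Γ.revPath p₂, ?_,
          LabeledGraph.isPathFrom_append hblk (LabeledGraph.isPathFrom_revPath hp₂), ?_⟩
        · intro e he
          rcases List.mem_append.mp he with he | he
          · exact hblkC e he
          · exact hrevC e he
        · rw [LabeledGraph.pathVal_append, LabeledGraph.pathVal_revPath]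
      have hgA : Γ.pathVal (genG φ gen) blk ∈ Asub φ := by
        have h' := hLabA hclosed
        have hmul := (Asub φ).mul_mem h' hp₂A
        simpa [mul_assoc] using hmul
      obtain ⟨a, ha⟩ := hgA
      obtain ⟨j', e', hj', hce', hie'⟩ :
          ∃ (j' : Fin 2) (e' : Γ.E), j' ≠ j ∧ colorE Γ e' = j' ∧ Γ.ini e' = β₁ := by
        obtain ⟨⟨f0, hif0, hc0⟩, ⟨f1, hif1, hc1⟩⟩ := h₁.2
        rcases fin_two_self j with rfl | rfl
        · exact ⟨1, f1, by decide, hc1, hif1⟩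
        · exact ⟨0, f0, by decide, hc0, hif0⟩
      obtain ⟨w₀, hw₀⟩ := exists_word (hgen j') (φ j' a)
      obtain ⟨v, q, hq, hqcol, hqword⟩ := readPath hpre' j' w₀ β₁ ⟨e', hce', hie'⟩
      have hqval : Γ.pathVal (genG φ gen) q = Γ.pathVal (genG φ gen) blk := by
        have hq0 : Γ.pathVal (genG φ gen) q = wordVal (genG φ gen) (Γ.word q) := rfl
        rw [hq0, hqword, wordVal_map_embed, hw₀, Monoid.PushoutI.of_apply_eq_base, ha]
      have hqnotC : ∀ e ∈ q, e ∉ C := by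
        intro e he hec
        exact hj' ((hqcol e he).symm.trans (hcol e hec))
      have hβ₂v : β₂ = v := by
        apply hGB β₂ v (Γ.revPath blk ++ q)
          (LabeledGraph.isPathFrom_append (LabeledGraph.isPathFrom_revPath hblk) hq)
        rw [LabeledGraph.pathVal_append, LabeledGraph.pathVal_revPath, hqval]
        group
      exact ⟨q, hβ₂v ▸ hq, hqnotC, hqval⟩
    -- end vertex of a nonempty `C`-path lies in `VSet C`
    have hend : ∀ (l : List Γ.E) (v u : Γ.V), Γ.IsPathFrom v u l → (∀ f ∈ l, f ∈ C) →
        l ≠ [] → u ∈ VSet Γ C := by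
      intro l
      induction l with
      | nil => intro v u _ _ h; exact absurd rfl h
      | cons e t ih =>
        intro v u hp hC _
        cases t with
        | nil =>
          have hter : Γ.ter e = u := hp.2
          rw [← hter]
          exact hterVS e (hC e List.mem_cons_self)
        | cons f r =>
          exact ih (Γ.ter e) u hp.2 (fun x hx => hC x (List.mem_cons_of_mem _ hx)) (by simp)
    -- main transformation: replace an arbitrary path by a `C`-avoiding one
    have htrans : ∀ (n : ℕ) (l : List Γ.E) (v w : Γ.V), l.length ≤ n →
        Γ.IsPathFrom v w l → v ∈ Set.range ψ.fV → w ∈ Set.range ψ.fV →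
        ∃ m, Γ.IsPathFrom v w m ∧ (∀ e ∈ m, e ∉ C) ∧
          Γ.pathVal (genG φ gen) m = Γ.pathVal (genG φ gen) l := by
      intro n
      induction n with
      | zero =>
        intro l v w hlen hp _ _
        have hnil : l = [] := List.length_eq_zero_iff.mp (Nat.le_zero.mp hlen)
        subst hnil
        exact ⟨[], hp, by simp, rfl⟩
      | succ n ih =>
        intro l v w hlen hp hv hw
        cases l with
        | nil => exact ⟨[], hp, by simp, rfl⟩
        | cons e t =>
          by_cases heC : e ∈ C
          · obtain ⟨blk, rest, heq, hbne, hblkC, hresthead⟩ :=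
              List.split_block (· ∈ C) t e heC
            have hive : Γ.ini e = v := hp.1
            rw [heq] at hp
            obtain ⟨u, hp₁, hp₂⟩ := LabeledGraph.isPathFrom_append_iff.mp hp
            have hvVB : v ∈ VB Γ C := hrange v hv ⟨e, heC, hive⟩
            have huVS : u ∈ VSet Γ C := hend blk v u hp₁ hblkC hbne
            have huVB : u ∈ VB Γ C := by
              cases rest with
              | nil =>
                have huw : u = w := hp₂
                rw [huw] at huVS ⊢
                exact hrange w hw huVS
              | cons f r =>
                exact hLB u huVS ⟨f, hp₂.1, hresthead f r rfl⟩
            obtain ⟨q, hq, hqC, hqval⟩ := hrep v u hvVB huVB blk hblkC hp₁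
            have hlen' : rest.length ≤ n := by
              have h3 : (e :: t).length = blk.length + rest.length := by
                rw [heq, List.length_append]
              have h2 : 1 ≤ blk.length := List.length_pos_iff.mpr hbne
              simp only [List.length_cons] at hlen h3
              omega
            obtain ⟨m', hm', hmC', hmval'⟩ := ih rest u w hlen' hp₂ (hVBrange u huVB) hw
            refine ⟨q ++ m', LabeledGraph.isPathFrom_append hq hm', ?_, ?_⟩
            · intro f hf
              rcases List.mem_append.mp hf with hf | hf
              · exact hqC f hf
              · exact hmC' f hf
            · rw [heq, LabeledGraph.pathVal_append, LabeledGraph.pathVal_append,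
                hqval, hmval']
          · have hlen'' : t.length ≤ n := by
              simp only [List.length_cons] at hlen; omega
            obtain ⟨m', hm', hmC', hmval'⟩ := ih t (Γ.ter e) w hlen'' hp.2
              (hterRange e heC) hw
            refine ⟨e :: m', ⟨hp.1, hm'⟩, ?_, ?_⟩
            · intro f hf
              rcases List.mem_cons.mp hf with rfl | hf
              · exact heC
              · exact hmC' f hf
            · rw [LabeledGraph.pathVal_cons, LabeledGraph.pathVal_cons, hmval']
    have hv₀r : v₀ ∈ Set.range ψ.fV := ⟨v₀', hb⟩
    have hConn' : Γ'.Connected := by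
      intro u' w'
      obtain ⟨l, hl⟩ := hConn (ψ.fV u') (ψ.fV w')
      obtain ⟨m, hm, hmC, _⟩ := htrans l.length l _ _ le_rfl hl ⟨u', rfl⟩ ⟨w', rfl⟩
      obtain ⟨w'', l', hw'', hl', _⟩ := ψ.lift_path hiV C hrE m u' (ψ.fV w') hm hmC
      exact ⟨l', (hiV hw'') ▸ hl'⟩
    refine ⟨⟨hWL', hConn', hGB', hSat'⟩, ?_⟩
    ext x
    constructor
    · rintro ⟨l, hp, hval⟩
      refine ⟨l.map ψ.fE, ?_, ?_⟩
      · have hh := ψ.map_path hp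
        rw [hb] at hh
        exact hh
      · exact (LabeledGraph.pathVal_eq_of_word_eq (ψ.word_map l)).trans hval
    · rintro ⟨l, hp, hval⟩
      obtain ⟨m, hm, hmC, hmval⟩ := htrans l.length l v₀ v₀ le_rfl hp hv₀r hv₀r
      rw [← hb] at hm
      obtain ⟨w'', l', hw'', hl', hmap⟩ := ψ.lift_path hiV C hrE m v₀' (ψ.fV v₀') hm hmC
      refine ⟨l', (hiV hw'') ▸ hl', ?_⟩
      have hvv : Γ'.pathVal (genG φ gen) l' = Γ.pathVal (genG φ gen) m := by
        rw [← hmap]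
        exact (LabeledGraph.pathVal_eq_of_word_eq (ψ.word_map l')).symm
      rw [hvv, hmval]
      exact hval
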